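/- With Δ_k = { x ∈ Γ_k : ∃ i,j ∈ S∖{0}, x + i + M^{-k} j ∈ Γ_k }, one has Δ_k ⊆ N_{3ε_k}(∂Λ), where ε_k = diam(M^{-k}Λ) and N_δ denotes δ-neighborhood. -/

import Mathlib

open Metric Set MeasureTheory
open scoped Pointwise

noncomputable section

/-- All complex eigenvalues of the real matrix `M` have modulus greater than `1`. -/
def IsExpandingMatrix {n : ℕ} (M : Matrix (Fin n) (Fin n) ℝ) : Prop :=
  ∀ z ∈ (M.charpoly.map (algebraMap ℝ ℂ)).roots, 1 < ‖z‖

/-- The real vector associated to an integer vector. -/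
def vecReal {n : ℕ} (v : Fin n → ℤ) : Fin n → ℝ := fun i => (v i : ℝ)

/-- `(M,R)` is a standard pair. -/
def IsStandardPair {n : ℕ} (M : Matrix (Fin n) (Fin n) ℤ) (R : Finset (Fin n → ℤ)) : Prop :=
  IsExpandingMatrix (M.map (Int.cast : ℤ → ℝ)) ∧ (0 : Fin n → ℤ) ∈ R ∧
    ∀ v : Fin n → ℤ, ∃! r, r ∈ R ∧ ∃ z : Fin n → ℤ, v = M.mulVec z + r

/-- The iterated function system map `τ(A) = ⋃_{r ∈ R} M⁻¹ (A + r)`. -/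
def tauIFS {n : ℕ} (M : Matrix (Fin n) (Fin n) ℝ) (R : Set (Fin n → ℝ))
    (A : Set (Fin n → ℝ)) : Set (Fin n → ℝ) :=
  ⋃ r ∈ R, (fun a => M⁻¹.mulVec (a + r)) '' A

/-- The difference multiset `D = R - R` (with multiplicity). -/
def diffMultiset {n : ℕ} (R : Finset (Fin n → ℤ)) : Multiset (Fin n → ℤ) :=
  (R ×ˢ R).val.map fun p => p.1 - p.2

/-- The entry `T_{ij} = card{(Mj + D) ∩ {i}}` of the transition matrix, counted
with multiplicity. -/
def Tentry {n : ℕ} (M : Matrix (Fin n) (Fin n) ℤ) (R : Finset (Fin n → ℤ))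
    (i j : Fin n → ℤ) : ℕ :=
  Multiset.count i ((diffMultiset R).map fun d => M.mulVec j + d)

/-- The set `S = (Λ - Λ) ∩ ℤⁿ` of integer differences of `Λ`. -/
def Sset {n : ℕ} (Λ : Set (Fin n → ℝ)) : Set (Fin n → ℤ) :=
  {v | vecReal v ∈ Λ - Λ}

/-- The `k`-th generation approximation `Γ_k = Σ_{i=1}^k M^{-i} R`. -/
def GammaSet {n : ℕ} (M : Matrix (Fin n) (Fin n) ℝ) (R : Set (Fin n → ℝ)) (k : ℕ) :
    Set (Fin n → ℝ) :=
  {x | ∃ f : Fin k → (Fin n → ℝ), (∀ i, f i ∈ R) ∧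
    x = ∑ i : Fin k, (M⁻¹ ^ ((i : ℕ) + 1)).mulVec (f i)}

/-- The `k`-th generation approximation `Δ_k` to the boundary of `Λ`. -/
def DeltaSet {n : ℕ} (M : Matrix (Fin n) (Fin n) ℝ) (R : Set (Fin n → ℝ))
    (Λ : Set (Fin n → ℝ)) (k : ℕ) : Set (Fin n → ℝ) :=
  {x ∈ GammaSet M R k | ∃ i ∈ Sset Λ, i ≠ 0 ∧ ∃ j ∈ Sset Λ, j ≠ 0 ∧
    x + vecReal i + (M⁻¹ ^ k).mulVec (vecReal j) ∈ GammaSet M R k}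

/-- `Λ` is a tile by the lattice `ℤⁿ`. -/
def IsTileByZn {n : ℕ} (Λ : Set (Fin n → ℝ)) : Prop :=
  IsCompact Λ ∧ 0 < MeasureTheory.volume Λ ∧
    (⋃ z : Fin n → ℤ, (fun x => x + vecReal z) '' Λ) = Set.univ ∧
    ∀ z : Fin n → ℤ, z ≠ 0 → MeasureTheory.volume (Λ ∩ ((fun x => x + vecReal z) '' Λ)) = 0

open Filter Topology
open scoped Matrix NNReal ENNReal

/-!
Write `j = a - b` with `a, b ∈ Λ` and put `p = x + M⁻ᵏ a`. The fixed-point equation gives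
`Γ_k + M⁻ᵏ Λ = Λ`, so both `p` and `x + i + M⁻ᵏ j + M⁻ᵏ b = p + i` lie in `Λ`. Every
neighbourhood of a point of `Λ` contains a small affine copy `x' + M⁻ᵏ Λ` of `Λ`, hence meets `Λ`
in positive measure; so if `p` were interior, `Λ ∩ (Λ + i)` would have positive measure, against
the tiling. Thus `p ∈ ∂Λ`, and since `0 ∈ Λ`, `‖x - p‖ = ‖M⁻ᵏ a - M⁻ᵏ 0‖ ≤ diam (M⁻ᵏ Λ)`.
That `M⁻ᵏ → 0` follows from Gelfand's formula: the eigenvalues of `M⁻¹` lie in the open unit disc.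
-/

theorem tendsto_pow_atTop_nhds_zero_of_forall_spectrum_norm_lt_one {A : Type*} [NormedRing A]
    [NormedAlgebra ℂ A] [CompleteSpace A] {a : A} (h : ∀ z ∈ spectrum ℂ a, ‖z‖ < 1) :
    Tendsto (a ^ ·) atTop (𝓝 0) := by
  rcases subsingleton_or_nontrivial A with _ | _
  · exact tendsto_const_nhds.congr fun _ => Subsingleton.elim _ _
  have hρ : spectralRadius ℂ a < 1 := by
    simpa using spectrum.spectralRadius_lt_of_forall_lt a (r := 1) fun z hz => h z hz
  obtain ⟨r, hρr, hr1⟩ := ENNReal.lt_iff_exists_nnreal_btwn.mp hρ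
  have hroot : ∀ᶠ k : ℕ in atTop, (‖a ^ k‖₊ : ℝ≥0∞) ^ (1 / k : ℝ) < r :=
    (spectrum.pow_nnnorm_pow_one_div_tendsto_nhds_spectralRadius a).eventually_lt_const hρr
  have hgeom : ∀ᶠ k : ℕ in atTop, ‖a ^ k‖ ≤ (r : ℝ) ^ k := by
    filter_upwards [hroot, eventually_ge_atTop 1] with k hk hk1
    have hk0 : (0 : ℝ) < k := by exact_mod_cast hk1
    have := ENNReal.rpow_lt_rpow hk hk0
    rw [← ENNReal.rpow_mul, one_div_mul_cancel hk0.ne', ENNReal.rpow_one,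
      ENNReal.rpow_natCast] at this
    exact_mod_cast this.le
  exact squeeze_zero_norm' hgeom
    (tendsto_pow_atTop_nhds_zero_of_lt_one r.coe_nonneg (by exact_mod_cast hr1))

namespace IsExpandingMatrix

variable {n : ℕ} {A : Matrix (Fin n) (Fin n) ℝ}

theorem det_ne_zero (hA : IsExpandingMatrix A) : A.det ≠ 0 := by
  have hdet : (A.map (algebraMap ℝ ℂ)).det = algebraMap ℝ ℂ A.det :=
    ((algebraMap ℝ ℂ).map_det A).symm
  rw [Matrix.det_eq_prod_roots_charpoly, Matrix.charpoly_map] at hdet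
  have hprod : (A.charpoly.map (algebraMap ℝ ℂ)).roots.prod ≠ 0 :=
    Multiset.prod_ne_zero fun h0 => absurd (hA 0 h0) (by simp)
  exact fun h => hprod (by simpa [h] using hdet)

theorem norm_lt_one_of_mem_spectrum_inv (hA : IsExpandingMatrix A) {z : ℂ}
    (hz : z ∈ spectrum ℂ (A⁻¹.map (algebraMap ℝ ℂ))) : ‖z‖ < 1 := by
  have hunit : IsUnit (A.map (algebraMap ℝ ℂ)) := by
    have := hA.det_ne_zero.isUnit.map (algebraMap ℝ ℂ)
    rw [RingHom.map_det] at this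
    exact (Matrix.isUnit_iff_isUnit_det _).mpr this
  set u := hunit.unit
  have hinv : ((u⁻¹ : (Matrix (Fin n) (Fin n) ℂ)ˣ) : Matrix (Fin n) (Fin n) ℂ) =
      A⁻¹.map (algebraMap ℝ ℂ) := by
    refine Units.inv_eq_of_mul_eq_one_right ?_
    rw [IsUnit.unit_spec, ← Matrix.map_mul, Matrix.mul_nonsing_inv _ hA.det_ne_zero.isUnit,
      Matrix.map_one _ (map_zero _) (map_one _)]
  rw [← hinv] at hz
  have hz0 : z ≠ 0 := spectrum.ne_zero_of_mem_of_unit hz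
  have hzinv : z⁻¹ ∈ spectrum ℂ (A.map (algebraMap ℝ ℂ)) := by
    have := (spectrum.inv_mem_iff (r := Units.mk0 z hz0) (a := u⁻¹)).mp hz
    simpa [u] using this
  rw [Matrix.mem_spectrum_iff_isRoot_charpoly, Matrix.charpoly_map] at hzinv
  have := hA _ ((Polynomial.mem_roots ((A.charpoly_monic.map _).ne_zero)).mpr hzinv)
  rwa [norm_inv, one_lt_inv₀ (norm_pos_iff.mpr hz0)] at this

attribute [local instance] Matrix.linftyOpNormedRing Matrix.linftyOpNormedAlgebra in
theorem tendsto_inv_pow (hA : IsExpandingMatrix A) :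
    Tendsto (fun k : ℕ => A⁻¹ ^ k) atTop (𝓝 0) := by
  have : CompleteSpace (Matrix (Fin n) (Fin n) ℂ) := FiniteDimensional.complete ℂ _
  have hc : Tendsto (fun k : ℕ => (A⁻¹ ^ k).map (algebraMap ℝ ℂ)) atTop (𝓝 0) := by
    simp_rw [Matrix.map_pow]
    exact tendsto_pow_atTop_nhds_zero_of_forall_spectrum_norm_lt_one
      fun z hz => hA.norm_lt_one_of_mem_spectrum_inv hz
  have hre := ((continuous_id.matrix_map Complex.continuous_re).tendsto 0).comp hc
  simpa [Function.comp_def, Matrix.map_map] using hre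

end IsExpandingMatrix

attribute [local instance] Matrix.linftyOpSeminormedAddCommGroup in
theorem Filter.Tendsto.eventually_forall_norm_mulVec_lt {ι α m p : Type*} [Fintype m]
    [Fintype p] [NonUnitalSeminormedRing α] {l : Filter ι} {B : ι → Matrix m p α}
    (hB : Tendsto B l (𝓝 0)) {K : Set (p → α)} (hK : Bornology.IsBounded K) {δ : ℝ}
    (hδ : 0 < δ) : ∀ᶠ i in l, ∀ v ∈ K, ‖B i *ᵥ v‖ < δ := by
  obtain ⟨C, hC⟩ := hK.exists_norm_le
  have hsmall : Tendsto (fun i => ‖B i‖ * (C + 1)) l (𝓝 0) := by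
    simpa using (tendsto_norm_zero.comp hB).mul_const (C + 1)
  filter_upwards [hsmall.eventually_lt_const hδ] with i hi v hv
  calc ‖B i *ᵥ v‖ ≤ ‖B i‖ * ‖v‖ := Matrix.linfty_opNorm_mulVec _ _
    _ ≤ ‖B i‖ * (C + 1) := by gcongr; linarith [hC v hv]
    _ < δ := hi

theorem mem_frontier_of_add_mem {E : Type*} [TopologicalSpace E] [AddGroup E]
    [IsTopologicalAddGroup E] [MeasurableSpace E] (μ : Measure E) {Λ : Set E} {p v : E}
    (hp : p ∈ Λ) (hdens : ∀ U ∈ 𝓝 (p + v), 0 < μ (U ∩ Λ))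
    (hnull : μ (Λ ∩ (· + v) '' Λ) = 0) : p ∈ frontier Λ := by
  refine ⟨subset_closure hp, fun hint => ?_⟩
  have htrans : (· + v) '' Λ ∈ 𝓝 (p + v) := by
    rw [Set.image_add_right]
    exact (continuous_add_const (-v)).continuousAt.preimage_mem_nhds
      (by simpa using mem_interior_iff_mem_nhds.mp hint)
  exact (hdens _ htrans).ne' (by rwa [Set.inter_comm])

section SelfAffine

variable {n : ℕ} {M : Matrix (Fin n) (Fin n) ℝ} {R Λ : Set (Fin n → ℝ)}

theorem sum_pow_succ_mulVec_cons {k : ℕ} (N : Matrix (Fin n) (Fin n) ℝ) (r : Fin n → ℝ)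
    (f : Fin k → Fin n → ℝ) :
    ∑ i : Fin (k + 1), (N ^ ((i : ℕ) + 1)) *ᵥ (Fin.cons r f : Fin (k + 1) → Fin n → ℝ) i =
      N *ᵥ (r + ∑ i : Fin k, (N ^ ((i : ℕ) + 1)) *ᵥ f i) := by
  simp only [Fin.sum_univ_succ, Fin.cons_zero, Fin.cons_succ, Fin.val_zero, Fin.val_succ,
    Matrix.mulVec_add, Matrix.mulVec_sum, Matrix.mulVec_mulVec, ← pow_succ', zero_add, pow_one]

theorem GammaSet_zero : GammaSet M R 0 = {0} := by
  ext x
  simp [GammaSet]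

theorem GammaSet_succ (k : ℕ) :
    GammaSet M R (k + 1) = (M⁻¹ *ᵥ ·) '' (R + GammaSet M R k) := by
  ext x
  constructor
  · rintro ⟨f, hf, rfl⟩
    rw [← Fin.cons_self_tail f, sum_pow_succ_mulVec_cons]
    exact ⟨_, Set.add_mem_add (hf 0) ⟨Fin.tail f, fun i => hf i.succ, rfl⟩, rfl⟩
  · rintro ⟨_, ⟨r, hr, _, ⟨f, hf, rfl⟩, rfl⟩, rfl⟩
    refine ⟨Fin.cons r f, fun i => Fin.cases hr hf i, ?_⟩
    rw [sum_pow_succ_mulVec_cons]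

theorem tauIFS_eq_image_add (A : Set (Fin n → ℝ)) :
    tauIFS M R A = (M⁻¹ *ᵥ ·) '' (A + R) := by
  ext x
  simp only [tauIFS, Set.mem_iUnion, Set.mem_image, Set.mem_add]
  constructor
  · rintro ⟨r, hr, a, ha, rfl⟩
    exact ⟨a + r, ⟨a, ha, r, hr, rfl⟩, rfl⟩
  · rintro ⟨_, ⟨a, ha, r, hr, rfl⟩, rfl⟩
    exact ⟨r, hr, a, ha, rfl⟩

theorem GammaSet_add_image_eq_of_tauIFS_eq (hfix : tauIFS M R Λ = Λ) (k : ℕ) :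
    GammaSet M R k + (M⁻¹ ^ k *ᵥ ·) '' Λ = Λ := by
  induction k with
  | zero => simp [GammaSet_zero]
  | succ k ih =>
    have himage : (M⁻¹ ^ (k + 1) *ᵥ ·) '' Λ = (M⁻¹ *ᵥ ·) '' ((M⁻¹ ^ k *ᵥ ·) '' Λ) := by
      simp only [Set.image_image, pow_succ', Matrix.mulVec_mulVec]
    calc GammaSet M R (k + 1) + (M⁻¹ ^ (k + 1) *ᵥ ·) '' Λ
        = M⁻¹.mulVecLin '' (R + GammaSet M R k + (M⁻¹ ^ k *ᵥ ·) '' Λ) := by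
          rw [GammaSet_succ, himage, Set.image_add]; rfl
      _ = Λ := by
          rw [add_assoc, ih, add_comm]
          exact (tauIFS_eq_image_add Λ).symm.trans hfix

theorem zero_mem_GammaSet (h0 : (0 : Fin n → ℝ) ∈ R) (k : ℕ) : (0 : Fin n → ℝ) ∈ GammaSet M R k :=
  ⟨fun _ => 0, fun _ => h0, by simp⟩

theorem add_inv_pow_mulVec_mem_of_tauIFS_eq (hfix : tauIFS M R Λ = Λ) {k : ℕ} {x y : Fin n → ℝ}
    (hx : x ∈ GammaSet M R k) (hy : y ∈ Λ) : x + M⁻¹ ^ k *ᵥ y ∈ Λ :=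
  GammaSet_add_image_eq_of_tauIFS_eq hfix k ▸ Set.add_mem_add hx (Set.mem_image_of_mem _ hy)

theorem zero_mem_of_tauIFS_eq (hM : Tendsto (fun k : ℕ => M⁻¹ ^ k) atTop (𝓝 0))
    (h0 : (0 : Fin n → ℝ) ∈ R) (hfix : tauIFS M R Λ = Λ) (hΛ : IsClosed Λ) (hne : Λ.Nonempty) :
    (0 : Fin n → ℝ) ∈ Λ := by
  obtain ⟨w, hw⟩ := hne
  have hlim : Tendsto (fun k : ℕ => M⁻¹ ^ k *ᵥ w) atTop (𝓝 0) := by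
    simpa [Function.comp_def] using
      ((continuous_id.matrix_mulVec continuous_const).tendsto 0).comp hM
  refine hΛ.mem_of_tendsto hlim (Eventually.of_forall fun k => ?_)
  simpa using add_inv_pow_mulVec_mem_of_tauIFS_eq hfix (zero_mem_GammaSet h0 k) hw

theorem volume_inter_pos_of_tauIFS_eq (hM : Tendsto (fun k : ℕ => M⁻¹ ^ k) atTop (𝓝 0))
    (hdet : M.det ≠ 0) (hfix : tauIFS M R Λ = Λ) (hΛ : Bornology.IsBounded Λ)
    (hvol : 0 < volume Λ) {w : Fin n → ℝ} (hw : w ∈ Λ) {U : Set (Fin n → ℝ)} (hU : U ∈ 𝓝 w) :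
    0 < volume (U ∩ Λ) := by
  obtain ⟨δ, hδ, hball⟩ := Metric.mem_nhds_iff.mp hU
  obtain ⟨k, hk⟩ := (hM.eventually_forall_norm_mulVec_lt (hΛ.sub hΛ) hδ).exists
  rw [← GammaSet_add_image_eq_of_tauIFS_eq hfix k] at hw
  obtain ⟨x, hx, _, ⟨y, hy, rfl⟩, rfl⟩ := hw
  have hpiece : x +ᵥ Matrix.toLin' (M⁻¹ ^ k) '' Λ ⊆ U ∩ Λ := by
    rintro _ ⟨_, ⟨z, hz, rfl⟩, rfl⟩
    refine ⟨hball ?_, add_inv_pow_mulVec_mem_of_tauIFS_eq hfix hx hz⟩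
    simp only [mem_ball, dist_eq_norm, Matrix.toLin'_apply, vadd_eq_add,
      add_sub_add_left_eq_sub, ← Matrix.mulVec_sub]
    exact hk _ (Set.sub_mem_sub hz hy)
  have hdetk : (M⁻¹ ^ k).det ≠ 0 := by
    rw [Matrix.det_pow]
    exact pow_ne_zero _ (Matrix.isUnit_nonsing_inv_det _ hdet.isUnit).ne_zero
  refine lt_of_lt_of_le ?_ (measure_mono hpiece)
  rw [measure_vadd, Measure.addHaar_image_linearMap, LinearMap.det_toLin']
  exact ENNReal.mul_pos (ENNReal.ofReal_pos.mpr (abs_pos.mpr hdetk)).ne' hvol.ne'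

end SelfAffine

theorem stmt10_general (n : ℕ) (M : Matrix (Fin n) (Fin n) ℤ) (R : Finset (Fin n → ℤ))
    (hMR : IsStandardPair M R)
    (Λ : Set (Fin n → ℝ)) (hne : Λ.Nonempty) (hc : IsCompact Λ)
    (hfix : tauIFS (M.map (Int.cast : ℤ → ℝ)) (vecReal '' ↑R) Λ = Λ)
    (htile : IsTileByZn Λ) :
    ∀ k : ℕ,
      DeltaSet (M.map (Int.cast : ℤ → ℝ)) (vecReal '' ↑R) Λ k ⊆
        Metric.cthickening
          (3 * Metric.diam ((fun x => ((M.map (Int.cast : ℤ → ℝ))⁻¹ ^ k).mulVec x) '' Λ))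
          (frontier Λ) := by
  obtain ⟨hexp, h0R, -⟩ := hMR
  have h0R' : (0 : Fin n → ℝ) ∈ vecReal '' ↑R := ⟨0, h0R, funext fun _ => Int.cast_zero⟩
  rintro k x ⟨hxΓ, i, -, hi0, j, hjS, -, hyΓ⟩
  obtain ⟨a, ha, b, hb, hab⟩ := hjS
  set N := (M.map (Int.cast : ℤ → ℝ))⁻¹ ^ k
  have hp : x + N *ᵥ a ∈ Λ := add_inv_pow_mulVec_mem_of_tauIFS_eq hfix hxΓ ha
  have hpi : x + N *ᵥ a + vecReal i ∈ Λ := by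
    convert add_inv_pow_mulVec_mem_of_tauIFS_eq hfix hyΓ hb using 1
    rw [← hab, Matrix.mulVec_sub]
    abel
  have hfront : x + N *ᵥ a ∈ frontier Λ :=
    mem_frontier_of_add_mem volume hp
      (fun U hU => volume_inter_pos_of_tauIFS_eq hexp.tendsto_inv_pow hexp.det_ne_zero hfix
        hc.isBounded htile.2.1 hpi hU)
      (htile.2.2.2 i hi0)
  have h0 : (0 : Fin n → ℝ) ∈ Λ :=
    zero_mem_of_tauIFS_eq hexp.tendsto_inv_pow h0R' hfix hc.isClosed hne
  have hdiam : dist x (x + N *ᵥ a) ≤ diam ((N *ᵥ ·) '' Λ) := by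
    rw [dist_self_add_right, ← dist_zero_right, ← Matrix.mulVec_zero N]
    exact dist_le_diam_of_mem ((hc.image (Continuous.matrix_mulVec continuous_const
      continuous_id)).isBounded) (Set.mem_image_of_mem _ ha) (Set.mem_image_of_mem _ h0)
  refine mem_cthickening_of_dist_le x _ _ _ hfront (hdiam.trans ?_)
  linarith [diam_nonneg (s := (N *ᵥ ·) '' Λ)]

/-- `Δ_k ⊆ N_{3 ε_k}(∂Λ)` where `ε_k = diam (M^{-k} Λ)`. -/
theorem stmt10 (n : ℕ) (M : Matrix (Fin n) (Fin n) ℤ) (R : Finset (Fin n → ℤ))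
    (hMR : IsStandardPair M R) (hdet : M.det ≠ 0)
    (Λ : Set (Fin n → ℝ)) (hne : Λ.Nonempty) (hc : IsCompact Λ)
    (hfix : tauIFS (M.map (Int.cast : ℤ → ℝ)) (vecReal '' ↑R) Λ = Λ)
    (htile : IsTileByZn Λ) :
    ∀ k : ℕ,
      DeltaSet (M.map (Int.cast : ℤ → ℝ)) (vecReal '' ↑R) Λ k ⊆
        Metric.cthickening
          (3 * Metric.diam ((fun x => ((M.map (Int.cast : ℤ → ℝ))⁻¹ ^ k).mulVec x) '' Λ))
          (frontier Λ) :=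
  stmt10_general n M R hMR Λ hne hc hfix htile
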